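/- arXiv:1703.10601 — 2 statements merged into one kernel-verified Lean document; each statement's English description precedes it below -/
import Mathlib

section
/- Let G be a group and let S be a G-graded ring. Then S is epsilon-strongly G-graded if and only if S is symmetrically G-graded and for each g ∈ G the ring S_g S_{g⁻¹} is unital. -/
/-!
If `S` is epsilon-strongly graded, then `ε_g` is a left identity on `S_g`, hence on
`S_g S_{g⁻¹}`, and the element `ε'` attached to `g⁻¹` is a right identity on `S_{g⁻¹}`, hence
on `S_g S_{g⁻¹}`; being a left and a right identity of the same ring, they coincide and form its
unit. Moreover `s = ε_g s ∈ S_g S_{g⁻¹} S_g` for `s ∈ S_g`, which gives symmetry. Conversely,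
the unit of `S_g S_{g⁻¹}` is a left identity on `S_g S_{g⁻¹} S_g = S_g`, and the unit of
`S_{g⁻¹} S_g` a right identity on `S_g S_{g⁻¹} S_g`.
-/

/-- The product `AB` of two additive subgroups of a (possibly non-unital) ring:
the additive subgroup generated by all products `ab` with `a ∈ A`, `b ∈ B`. -/
def sgMul {S : Type*} [NonUnitalRing S] (A B : AddSubgroup S) : AddSubgroup S :=
  AddSubgroup.closure {x | ∃ a ∈ A, ∃ b ∈ B, x = a * b}

section
variable {G : Type*} [Group G] {S : Type*} [NonUnitalRing S]

/-- A `G`-graded ring `S = ⊕_{g ∈ G} S_g` is *epsilon-strongly `G`-graded* if for every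
`g ∈ G` there are `ε ∈ S_g S_{g⁻¹}` and `ε' ∈ S_{g⁻¹} S_g` with `ε s = s` and `s ε' = s`
for all `s ∈ S_g`. -/
def IsEpsilonStronglyGraded (𝒜 : G → AddSubgroup S) : Prop :=
  ∀ g : G, ∃ ε ∈ sgMul (𝒜 g) (𝒜 g⁻¹), ∃ ε' ∈ sgMul (𝒜 g⁻¹) (𝒜 g),
    ∀ s ∈ 𝒜 g, ε * s = s ∧ s * ε' = s

/-- `S` is *symmetrically `G`-graded* if `S_g S_{g⁻¹} S_g = S_g` for all `g ∈ G`. -/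
def IsSymmetricallyGraded (𝒜 : G → AddSubgroup S) : Prop :=
  ∀ g : G, sgMul (sgMul (𝒜 g) (𝒜 g⁻¹)) (𝒜 g) = 𝒜 g

/-- `S` is *nearly epsilon-strongly `G`-graded* if for every `g ∈ G` and `s ∈ S_g` one has
`s ∈ (S_g S_{g⁻¹}) s` and `s ∈ s (S_{g⁻¹} S_g)`. -/
def IsNearlyEpsilonStronglyGraded (𝒜 : G → AddSubgroup S) : Prop :=
  ∀ g : G, ∀ s ∈ 𝒜 g,
    (∃ t ∈ sgMul (𝒜 g) (𝒜 g⁻¹), t * s = s) ∧ (∃ t ∈ sgMul (𝒜 g⁻¹) (𝒜 g), s * t = s)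

/-- An additive subgroup of a ring is a *unital* ring if it contains a two-sided
multiplicative identity for itself. -/
def IsUnitalSubgroup (A : AddSubgroup S) : Prop :=
  ∃ u ∈ A, ∀ a ∈ A, u * a = a ∧ a * u = a

/-- An additive subgroup of a ring is an *s-unital* ring if `t ∈ At` and `t ∈ tA`
for every `t ∈ A`. -/
def IsSUnitalSubgroup (A : AddSubgroup S) : Prop :=
  ∀ t ∈ A, (∃ a ∈ A, a * t = t) ∧ (∃ b ∈ A, t * b = t)

end

section sgMul

variable {S : Type*} [NonUnitalRing S] {A B C : AddSubgroup S}

lemma mul_mem_sgMul {a b : S} (ha : a ∈ A) (hb : b ∈ B) : a * b ∈ sgMul A B :=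
  AddSubgroup.subset_closure ⟨a, ha, b, hb, rfl⟩

lemma sgMul_le (h : ∀ a ∈ A, ∀ b ∈ B, a * b ∈ C) : sgMul A B ≤ C :=
  (AddSubgroup.closure_le C).2 fun _ ⟨a, ha, b, hb, hx⟩ => hx ▸ h a ha b hb

lemma sgMul_sgMul_le : sgMul (sgMul A B) C ≤ sgMul A (sgMul B C) :=
  sgMul_le fun x hx c hc => by
    have : sgMul A B ≤ (sgMul A (sgMul B C)).comap (AddMonoidHom.mulRight c) :=
      sgMul_le fun a ha b hb => by
        simpa [mul_assoc] using mul_mem_sgMul ha (mul_mem_sgMul hb hc)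
    exact this hx

lemma mul_eq_self_of_mem_sgMul_left {e x : S} (he : ∀ a ∈ A, e * a = a)
    (hx : x ∈ sgMul A B) : e * x = x := by
  have : sgMul A B ≤ (AddMonoidHom.mulLeft e - AddMonoidHom.id S).ker :=
    sgMul_le fun a ha b _ => by simp [← mul_assoc, he a ha]
  simpa [sub_eq_zero] using this hx

lemma mul_eq_self_of_mem_sgMul_right {e x : S} (he : ∀ b ∈ B, b * e = b)
    (hx : x ∈ sgMul A B) : x * e = x := by
  have : sgMul A B ≤ (AddMonoidHom.mulRight e - AddMonoidHom.id S).ker :=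
    sgMul_le fun a _ b hb => by simp [mul_assoc, he b hb]
  simpa [sub_eq_zero] using this hx

lemma isUnitalSubgroup_of_left_right {e f : S} (he : e ∈ A) (hf : f ∈ A)
    (hleft : ∀ a ∈ A, e * a = a) (hright : ∀ a ∈ A, a * f = a) : IsUnitalSubgroup A := by
  have hef : e = f := by rw [← hleft f hf, hright e he]
  exact ⟨e, he, fun a ha => ⟨hleft a ha, hef ▸ hright a ha⟩⟩

end sgMul

section Graded

variable {G : Type*} [Group G] {S : Type*} [NonUnitalRing S] {𝒜 : G → AddSubgroup S}

lemma IsEpsilonStronglyGraded.isSymmetricallyGraded (hes : IsEpsilonStronglyGraded 𝒜)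
    (hmul : ∀ (g h : G), ∀ a ∈ 𝒜 g, ∀ b ∈ 𝒜 h, a * b ∈ 𝒜 (g * h)) :
    IsSymmetricallyGraded 𝒜 := by
  intro g
  apply le_antisymm
  · refine sgMul_le fun x hx c hc => ?_
    have hx' : x ∈ 𝒜 (g * g⁻¹) := sgMul_le (hmul g g⁻¹) hx
    simpa using hmul _ _ x hx' c hc
  · intro s hs
    obtain ⟨ε, hε, _, _, hid⟩ := hes g
    rw [← (hid s hs).1]
    exact mul_mem_sgMul hε hs

lemma IsEpsilonStronglyGraded.isUnitalSubgroup_sgMul (hes : IsEpsilonStronglyGraded 𝒜)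
    (g : G) : IsUnitalSubgroup (sgMul (𝒜 g) (𝒜 g⁻¹)) := by
  obtain ⟨ε, hε, _, _, hid⟩ := hes g
  obtain ⟨_, _, δ, hδ, hid'⟩ := hes g⁻¹
  rw [inv_inv] at hδ
  exact isUnitalSubgroup_of_left_right hε hδ
    (fun _ => mul_eq_self_of_mem_sgMul_left fun a ha => (hid a ha).1)
    (fun _ => mul_eq_self_of_mem_sgMul_right fun b hb => (hid' b hb).2)

lemma IsSymmetricallyGraded.isEpsilonStronglyGraded (hsym : IsSymmetricallyGraded 𝒜)
    (huni : ∀ g : G, IsUnitalSubgroup (sgMul (𝒜 g) (𝒜 g⁻¹))) :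
    IsEpsilonStronglyGraded 𝒜 := by
  intro g
  obtain ⟨ε, hε, hεid⟩ := huni g
  obtain ⟨ε', hε', hε'id⟩ := huni g⁻¹
  rw [inv_inv] at hε' hε'id
  refine ⟨ε, hε, ε', hε', fun s hs => ?_⟩
  rw [← hsym g] at hs
  exact ⟨mul_eq_self_of_mem_sgMul_left (fun a ha => (hεid a ha).1) hs,
    mul_eq_self_of_mem_sgMul_right (fun b hb => (hε'id b hb).2) (sgMul_sgMul_le hs)⟩

end Graded

theorem epsilonStrongly_iff_symmetrically_and_unital_general
    {G : Type*} [Group G] {S : Type*} [NonUnitalRing S]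
    (𝒜 : G → AddSubgroup S)
    (hmul : ∀ (g h : G), ∀ a ∈ 𝒜 g, ∀ b ∈ 𝒜 h, a * b ∈ 𝒜 (g * h)) :
    IsEpsilonStronglyGraded 𝒜 ↔
      IsSymmetricallyGraded 𝒜 ∧ ∀ g : G, IsUnitalSubgroup (sgMul (𝒜 g) (𝒜 g⁻¹)) :=
  ⟨fun hes => ⟨hes.isSymmetricallyGraded hmul, hes.isUnitalSubgroup_sgMul⟩,
    fun ⟨hsym, huni⟩ => hsym.isEpsilonStronglyGraded huni⟩

/-- A `G`-graded ring `S` is epsilon-strongly `G`-graded if and only if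
`S` is symmetrically `G`-graded and, for each `g ∈ G`, the ring `S_g S_{g⁻¹}` is unital. -/
theorem epsilonStrongly_iff_symmetrically_and_unital
    {G : Type*} [Group G] [DecidableEq G] {S : Type*} [NonUnitalRing S]
    (𝒜 : G → AddSubgroup S)
    (hmul : ∀ (g h : G), ∀ a ∈ 𝒜 g, ∀ b ∈ 𝒜 h, a * b ∈ 𝒜 (g * h))
    (hdecomp : DirectSum.IsInternal 𝒜) :
    IsEpsilonStronglyGraded 𝒜 ↔
      IsSymmetricallyGraded 𝒜 ∧ ∀ g : G, IsUnitalSubgroup (sgMul (𝒜 g) (𝒜 g⁻¹)) :=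
  epsilonStrongly_iff_symmetrically_and_unital_general 𝒜 hmul
end

section
/- Let G be a group and let S be a G-graded ring. Then S is epsilon-strongly G-graded if and only if for each g ∈ G there exists an element ε_g ∈ S_g S_{g⁻¹} such that for all s ∈ S_g the equalities ε_g s = s and s ε_{g⁻¹} = s hold. -/
lemma sgMul_left_unit {S : Type*} [NonUnitalRing S] {A B : AddSubgroup S} {c : S}
    (hc : ∀ a ∈ A, c * a = a) {t : S} (ht : t ∈ sgMul A B) : c * t = t := by
  have : sgMul A B ≤
      { carrier := {x | c * x = x}
        zero_mem' := mul_zero c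
        add_mem' := fun {x y} hx hy => by
          simp only [Set.mem_setOf_eq] at *; rw [mul_add, hx, hy]
        neg_mem' := fun {x} hx => by
          simp only [Set.mem_setOf_eq] at *; rw [mul_neg, hx] } := by
    refine (AddSubgroup.closure_le _).2 ?_
    rintro x ⟨a, ha, b, hb, rfl⟩
    show c * (a * b) = a * b
    rw [← mul_assoc, hc a ha]
  exact this ht

lemma sgMul_right_unit {S : Type*} [NonUnitalRing S] {A B : AddSubgroup S} {c : S}
    (hc : ∀ b ∈ B, b * c = b) {t : S} (ht : t ∈ sgMul A B) : t * c = t := by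
  have : sgMul A B ≤
      { carrier := {x | x * c = x}
        zero_mem' := zero_mul c
        add_mem' := fun {x y} hx hy => by
          simp only [Set.mem_setOf_eq] at *; rw [add_mul, hx, hy]
        neg_mem' := fun {x} hx => by
          simp only [Set.mem_setOf_eq] at *; rw [neg_mul, hx] } := by
    refine (AddSubgroup.closure_le _).2 ?_
    rintro x ⟨a, ha, b, hb, rfl⟩
    show a * b * c = a * b
    rw [mul_assoc, hc b hb]
  exact this ht

/-- A `G`-graded ring `S` is epsilon-strongly `G`-graded if and only if
for each `g ∈ G` there exists `ε_g ∈ S_g S_{g⁻¹}` such that `ε_g s = s` and `s ε_{g⁻¹} = s`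
for all `s ∈ S_g`. -/
theorem epsilonStrongly_iff_exists_eps
    {G : Type*} [Group G] [DecidableEq G] {S : Type*} [NonUnitalRing S]
    (𝒜 : G → AddSubgroup S)
    (hmul : ∀ (g h : G), ∀ a ∈ 𝒜 g, ∀ b ∈ 𝒜 h, a * b ∈ 𝒜 (g * h))
    (hdecomp : DirectSum.IsInternal 𝒜) :
    IsEpsilonStronglyGraded 𝒜 ↔
      ∃ ε : G → S, ∀ g : G, ε g ∈ sgMul (𝒜 g) (𝒜 g⁻¹) ∧
        ∀ s ∈ 𝒜 g, ε g * s = s ∧ s * ε g⁻¹ = s := by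
  constructor
  · intro h
    choose ε hmem ε' hε' hu using h
    refine ⟨ε, fun g => ⟨hmem g, fun s hs => ⟨(hu g s hs).1, ?_⟩⟩⟩
    have hmem' : ε g⁻¹ ∈ sgMul (𝒜 g⁻¹) (𝒜 g) := by simpa using hmem g⁻¹
    have key : ε g⁻¹ = ε' g := by
      have h1 : ε g⁻¹ * ε' g = ε' g :=
        sgMul_left_unit (fun a ha => (hu g⁻¹ a ha).1) (hε' g)
      have h2 : ε g⁻¹ * ε' g = ε g⁻¹ :=
        sgMul_right_unit (fun b hb => (hu g b hb).2) hmem'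
      exact h2.symm.trans h1
    rw [key]; exact (hu g s hs).2
  · rintro ⟨ε, hε⟩ g
    obtain ⟨hmem, hu⟩ := hε g
    obtain ⟨hmem', -⟩ := hε g⁻¹
    simp only [inv_inv] at hmem'
    exact ⟨ε g, hmem, ε g⁻¹, hmem', hu⟩
end
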